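/- The class of context-free languages is strictly contained in the class of languages generated by (returning or non-returning) PC grammar systems with two context-free components: L(CF) ⊊ L(X_2 CF) for X ∈ {PC, NPC}. -/

import Mathlib

/-- Symbols of a PC grammar system with `n` components: nonterminals from `N`,
terminals from `T`, and query symbols `Q_i` for `i : Fin n`. -/
inductive PCSym (N T : Type) (n : ℕ) where
  | nt (A : N) : PCSym N T n
  | tm (a : T) : PCSym N T n
  | qr (i : Fin n) : PCSym N T n

/-- A context-free component grammar: a finite list of context-free rules
`A → w` with `w` over `N ∪ T ∪ K`, and an axiom (start symbol). -/
structure PCComponent (N T : Type) (n : ℕ) where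
  rules : List (N × List (PCSym N T n))
  start : N

/-- A PC grammar system with `n` context-free components and a master. -/
structure PCGS (N T : Type) (n : ℕ) where
  comp : Fin n → PCComponent N T n
  master : Fin n

namespace PCGS

variable {N T : Type} {n : ℕ}

/-- The string contains at least one query symbol. -/
def hasQuery (x : List (PCSym N T n)) : Prop := ∃ i : Fin n, PCSym.qr i ∈ x

/-- The string is a terminal word (all symbols are terminals). -/
def isTerminalWord (x : List (PCSym N T n)) : Prop := ∀ s ∈ x, ∃ a : T, s = PCSym.tm a

/-- One context-free rewriting step of a component grammar. -/
def Rewrite (G : PCComponent N T n) (x y : List (PCSym N T n)) : Prop :=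
  ∃ (u v : List (PCSym N T n)) (A : N) (w : List (PCSym N T n)),
    x = u ++ PCSym.nt A :: v ∧ (A, w) ∈ G.rules ∧ y = u ++ w ++ v

/-- Replace every query symbol `Q_i` in `x` by the string of component `i`. -/
def subst (c : Fin n → List (PCSym N T n)) (x : List (PCSym N T n)) : List (PCSym N T n) :=
  x.flatMap fun s => match s with
    | PCSym.qr i => c i
    | s => [s]

/-- All queries of component `i` can be answered: the queried components'
strings are query-free. -/
def answered (c : Fin n → List (PCSym N T n)) (i : Fin n) : Prop :=
  hasQuery (c i) ∧ ∀ j : Fin n, PCSym.qr j ∈ c i → ¬ hasQuery (c j)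

/-- Synchronized rewriting step: no query symbol occurs; every component with a
non-terminal string performs one context-free step, terminal strings stay. -/
def RewriteStep (Γ : PCGS N T n) (c c' : Fin n → List (PCSym N T n)) : Prop :=
  (∀ i, ¬ hasQuery (c i)) ∧
  ∀ i, (isTerminalWord (c i) ∧ c' i = c i) ∨
       (¬ isTerminalWord (c i) ∧ Rewrite (Γ.comp i) (c i) (c' i))

/-- Component `j` was successfully queried by some component. -/
def Reset (c : Fin n → List (PCSym N T n)) (j : Fin n) : Prop :=
  ∃ i, answered c i ∧ PCSym.qr j ∈ c i

/-- Communication step. In returning mode successfully queried components reset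
to their axioms; in non-returning mode they keep their strings. -/
def CommStep (returning : Bool) (Γ : PCGS N T n) (c c' : Fin n → List (PCSym N T n)) : Prop :=
  (∃ i, hasQuery (c i)) ∧
  ∀ i,
    (answered c i ∧ c' i = subst c (c i)) ∨
    (hasQuery (c i) ∧ ¬ answered c i ∧ c' i = c i) ∨
    (¬ hasQuery (c i) ∧ returning = true ∧ Reset c i ∧ c' i = [PCSym.nt (Γ.comp i).start]) ∨
    (¬ hasQuery (c i) ∧ (returning = false ∨ ¬ Reset c i) ∧ c' i = c i)

/-- A direct derivation step of a PC grammar system. -/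
def Step (returning : Bool) (Γ : PCGS N T n) (c c' : Fin n → List (PCSym N T n)) : Prop :=
  RewriteStep Γ c c' ∨ CommStep returning Γ c c'

/-- The initial configuration `(S_1, …, S_n)`. -/
def initConfig (Γ : PCGS N T n) : Fin n → List (PCSym N T n) :=
  fun i => [PCSym.nt (Γ.comp i).start]

/-- The language generated by the master component of `Γ`. -/
def language (returning : Bool) (Γ : PCGS N T n) : Language T :=
  { w | ∃ c, Relation.ReflTransGen (Step returning Γ) (initConfig Γ) c ∧
        c Γ.master = w.map PCSym.tm }

end PCGS

/-- The class of languages generated by non-returning PC grammar systems with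
at most `n` context-free components. -/
def NPCLang (n : ℕ) (T : Type) : Set (Language T) :=
  { L | ∃ (k : ℕ) (_ : k ≤ n) (N : Type) (_ : Finite N) (Γ : PCGS N T k),
      PCGS.language false Γ = L }

/-- The class of languages generated by returning PC grammar systems with
at most `n` context-free components. -/
def PCLangR (n : ℕ) (T : Type) : Set (Language T) :=
  { L | ∃ (k : ℕ) (_ : k ≤ n) (N : Type) (_ : Finite N) (Γ : PCGS N T k),
      PCGS.language true Γ = L }

/-!
A context-free grammar is simulated by a PC grammar system with a single component: no query
symbols ever occur, so its derivations are exactly those of the grammar, in either mode.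

For strictness, a two-component system generates `{aⁿbⁿcⁿ | n ≥ 1}` in both modes: the helper
builds `bⁿS₁cⁿ` in lockstep with the master's `aⁿ`, the query splices it into the master's string,
and the master erases `S₁`. This language is not context-free, by the pumping lemma.
-/

namespace ContextFreeGrammar

inductive ParseTree (T N : Type*) where
  | node (A : N) (children : List (T ⊕ ParseTree T N))

namespace ParseTree

variable {T N : Type*}

def root : ParseTree T N → N
  | node A _ => A

def children : ParseTree T N → List (T ⊕ ParseTree T N)
  | node _ cs => cs

mutual
def yield : ParseTree T N → List T
  | node _ cs => yields cs
def yields : List (T ⊕ ParseTree T N) → List T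
  | [] => []
  | .inl a :: cs => a :: yields cs
  | .inr t :: cs => t.yield ++ yields cs
end

mutual
def size : ParseTree T N → ℕ
  | node _ cs => sizes cs + 1
def sizes : List (T ⊕ ParseTree T N) → ℕ
  | [] => 0
  | .inl _ :: cs => sizes cs + 1
  | .inr t :: cs => t.size + sizes cs + 1
end

mutual
def height : ParseTree T N → ℕ
  | node _ cs => heights cs + 1
def heights : List (T ⊕ ParseTree T N) → ℕ
  | [] => 0
  | .inl _ :: cs => heights cs
  | .inr t :: cs => max t.height (heights cs)
end

@[simp] lemma root_node (A : N) (cs : List (T ⊕ ParseTree T N)) : (node A cs).root = A := rfl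
@[simp] lemma children_node (A : N) (cs : List (T ⊕ ParseTree T N)) :
    (node A cs).children = cs := rfl
@[simp] lemma yield_node (A : N) (cs : List (T ⊕ ParseTree T N)) :
    (node A cs).yield = yields cs := rfl
@[simp] lemma size_node (A : N) (cs : List (T ⊕ ParseTree T N)) :
    (node A cs).size = sizes cs + 1 := rfl
@[simp] lemma height_node (A : N) (cs : List (T ⊕ ParseTree T N)) :
    (node A cs).height = heights cs + 1 := rfl

@[simp] lemma yields_nil : yields ([] : List (T ⊕ ParseTree T N)) = [] := rfl
@[simp] lemma yields_cons_inl (a : T) (cs : List (T ⊕ ParseTree T N)) :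
    yields (.inl a :: cs) = a :: yields cs := rfl
@[simp] lemma yields_cons_inr (t : ParseTree T N) (cs : List (T ⊕ ParseTree T N)) :
    yields (.inr t :: cs) = t.yield ++ yields cs := rfl
@[simp] lemma sizes_nil : sizes ([] : List (T ⊕ ParseTree T N)) = 0 := rfl
@[simp] lemma sizes_cons_inl (a : T) (cs : List (T ⊕ ParseTree T N)) :
    sizes (.inl a :: cs) = sizes cs + 1 := rfl
@[simp] lemma sizes_cons_inr (t : ParseTree T N) (cs : List (T ⊕ ParseTree T N)) :
    sizes (.inr t :: cs) = t.size + sizes cs + 1 := rfl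
@[simp] lemma heights_nil : heights ([] : List (T ⊕ ParseTree T N)) = 0 := rfl
@[simp] lemma heights_cons_inl (a : T) (cs : List (T ⊕ ParseTree T N)) :
    heights (.inl a :: cs) = heights cs := rfl
@[simp] lemma heights_cons_inr (t : ParseTree T N) (cs : List (T ⊕ ParseTree T N)) :
    heights (.inr t :: cs) = max t.height (heights cs) := rfl

@[simp] lemma yields_append (cs ds : List (T ⊕ ParseTree T N)) :
    yields (cs ++ ds) = yields cs ++ yields ds := by
  induction cs with
  | nil => rfl
  | cons c cs ih => rcases c with a | t <;> simp [ih]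

@[simp] lemma sizes_append (cs ds : List (T ⊕ ParseTree T N)) :
    sizes (cs ++ ds) = sizes cs + sizes ds := by
  induction cs with
  | nil => simp
  | cons c cs ih => rcases c with a | t <;> simp [ih] <;> omega

@[simp] lemma yields_map_inl (w : List T) :
    yields (w.map (.inl : T → T ⊕ ParseTree T N)) = w := by
  induction w with
  | nil => rfl
  | cons a w ih => simp [ih]

lemma size_lt_sizes {t : ParseTree T N} {cs : List (T ⊕ ParseTree T N)} (h : .inr t ∈ cs) :
    t.size < sizes cs := by
  induction cs with
  | nil => simp at h
  | cons c cs ih =>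
    rcases c with a | s
    · have := ih (by simpa using h); simp; omega
    · rcases List.mem_cons.mp h with h | h
      · cases h; simp
      · have := ih h; simp; omega

lemma height_le_heights {t : ParseTree T N} {cs : List (T ⊕ ParseTree T N)} (h : .inr t ∈ cs) :
    t.height ≤ heights cs := by
  induction cs with
  | nil => simp at h
  | cons c cs ih =>
    rcases c with a | s
    · simpa using ih (by simpa using h)
    · rcases List.mem_cons.mp h with h | h
      · cases h; simp
      · simpa using Or.inr (ih h)

lemma exists_height_eq_heights {cs : List (T ⊕ ParseTree T N)} (h : heights cs ≠ 0) :
    ∃ t, .inr t ∈ cs ∧ t.height = heights cs := by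
  induction cs with
  | nil => simp at h
  | cons c cs ih =>
    rcases c with a | s
    · obtain ⟨t, ht, he⟩ := ih (by simpa using h)
      exact ⟨t, by simp [ht], by simpa using he⟩
    · by_cases hle : heights cs ≤ s.height
      · exact ⟨s, by simp, by simp [hle]⟩
      · obtain ⟨t, ht, he⟩ := ih (by omega)
        exact ⟨t, by simp [ht], by simp; omega⟩

def HasChild (t s : ParseTree T N) : Prop := .inr s ∈ t.children

lemma HasChild.size_lt {t s : ParseTree T N} (h : HasChild t s) : s.size < t.size := by
  cases t
  simpa [Nat.lt_succ_iff] using (size_lt_sizes h).le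

lemma size_lt_of_transGen {t s : ParseTree T N} (h : Relation.TransGen HasChild t s) :
    s.size < t.size := by
  induction h with
  | single h => exact h.size_lt
  | tail _ h ih => exact h.size_lt.trans ih

lemma length_yields_le {b : ℕ} (hb : 1 ≤ b) {cs : List (T ⊕ ParseTree T N)}
    (h : ∀ t, .inr t ∈ cs → t.yield.length ≤ b) :
    (yields cs).length ≤ cs.length * b := by
  induction cs with
  | nil => simp
  | cons c cs ih =>
    have hcs := ih fun t ht => h t (List.mem_cons_of_mem _ ht)
    rcases c with a | t
    · simp only [yields_cons_inl, List.length_cons, add_mul]; omega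
    · have := h t List.mem_cons_self
      simp only [yields_cons_inr, List.length_append, List.length_cons, add_mul]; omega

lemma exists_transGen_root_eq [DecidableEq N] {s : Finset N} {l : List (ParseTree T N)}
    (hl : l.Pairwise (Relation.TransGen HasChild)) (hs : ∀ t ∈ l, t.root ∈ s)
    (hcard : s.card < l.length) :
    ∃ t₁ ∈ l, ∃ t₂, Relation.TransGen HasChild t₁ t₂ ∧ t₁.root = t₂.root := by
  have hdup : ¬ (l.map root).Nodup := by
    intro hnd
    have hsub : (l.map root).toFinset ⊆ s := by simpa [Finset.subset_iff] using hs
    have := Finset.card_le_card hsub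
    rw [List.toFinset_card_of_nodup hnd, List.length_map] at this
    omega
  obtain ⟨A, hA⟩ := not_forall_not.mp (mt List.nodup_iff_sublist.mpr hdup)
  obtain ⟨l', hl', hmap⟩ := List.sublist_map_iff.mp hA
  rcases l' with _ | ⟨t₁, _ | ⟨t₂, _ | _⟩⟩ <;> simp at hmap
  exact ⟨t₁, hl'.subset (by simp), t₂, List.rel_of_pairwise_cons (hl.sublist hl') (by simp),
    hmap.1.symm.trans hmap.2⟩

def toSymbol : T ⊕ ParseTree T N → Symbol T N :=
  Sum.elim .terminal fun t => .nonterminal t.root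

@[simp] lemma toSymbol_inl (a : T) : toSymbol (.inl a : T ⊕ ParseTree T N) = .terminal a := rfl
@[simp] lemma toSymbol_inr (t : ParseTree T N) : toSymbol (.inr t) = .nonterminal t.root := rfl

end ParseTree

open ParseTree

variable {T : Type*} {g : ContextFreeGrammar T}

inductive IsParseTree (g : ContextFreeGrammar T) : ParseTree T g.NT → Prop
  | node {cs : List (T ⊕ ParseTree T g.NT)} (r : ContextFreeRule T g.NT) (hr : r ∈ g.rules)
      (hout : r.output = cs.map toSymbol) (hcs : ∀ t, .inr t ∈ cs → IsParseTree g t) :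
      IsParseTree g (.node r.input cs)

lemma IsParseTree.child {t s : ParseTree T g.NT} (ht : IsParseTree g t) (h : t.HasChild s) :
    IsParseTree g s := by
  cases ht with
  | node r hr hout hcs => exact hcs s h

lemma IsParseTree.of_reflTransGen {t s : ParseTree T g.NT} (ht : IsParseTree g t)
    (h : Relation.ReflTransGen HasChild t s) : IsParseTree g s := by
  induction h with
  | refl => exact ht
  | tail _ h ih => exact ih.child h

lemma derives_yields {cs : List (T ⊕ ParseTree T g.NT)}
    (h : ∀ t, .inr t ∈ cs → g.Derives [.nonterminal t.root] (t.yield.map .terminal)) :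
    g.Derives (cs.map toSymbol) ((yields cs).map .terminal) := by
  induction cs with
  | nil => exact Relation.ReflTransGen.refl
  | cons c cs ih =>
    have hcs := ih fun t ht => h t (List.mem_cons_of_mem _ ht)
    rcases c with a | t
    · simpa using hcs.append_left [.terminal a]
    · have ht := (h t List.mem_cons_self).append_right (cs.map toSymbol)
      simpa using ht.trans (hcs.append_left _)

lemma IsParseTree.derives {t : ParseTree T g.NT} (ht : IsParseTree g t) :
    g.Derives [.nonterminal t.root] (t.yield.map .terminal) := by
  induction ht with
  | node r hr hout _ ih =>
    refine .head ⟨r, hr, ?_⟩ (derives_yields ih)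
    simpa [hout] using ContextFreeRule.Rewrites.input_output (r := r)

lemma exists_forest_of_derives {x : List (Symbol T g.NT)} {w : List T}
    (h : g.Derives x (w.map .terminal)) :
    ∃ cs : List (T ⊕ ParseTree T g.NT), x = cs.map toSymbol ∧ yields cs = w ∧
      ∀ t, .inr t ∈ cs → IsParseTree g t := by
  induction h using Relation.ReflTransGen.head_induction_on with
  | refl => exact ⟨w.map .inl, by simp [Function.comp_def], by simp, by simp⟩
  | head hstep _ ih =>
    obtain ⟨r, hr, hrw⟩ := hstep
    obtain ⟨p, q, rfl, rfl⟩ := hrw.exists_parts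
    obtain ⟨cs, hcs, rfl, hval⟩ := ih
    rw [List.append_assoc] at hcs
    obtain ⟨cs₁, cs₂₃, rfl, hmap₁, hmap₂₃⟩ := List.map_eq_append_iff.mp hcs.symm
    obtain ⟨cs₂, cs₃, rfl, hmap₂, rfl⟩ := List.map_eq_append_iff.mp hmap₂₃
    refine ⟨cs₁ ++ .inr (.node r.input cs₂) :: cs₃, by simp [hmap₁], by simp, ?_⟩
    intro t ht
    simp only [List.mem_append, List.mem_cons, Sum.inr.injEq] at ht
    rcases ht with ht | rfl | ht
    · exact hval t (by simp [ht])
    · exact .node r hr hmap₂.symm fun t ht => hval t (by simp [ht])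
    · exact hval t (by simp [ht])

lemma exists_isParseTree_of_mem_language {w : List T} (hw : w ∈ g.language) :
    ∃ t, IsParseTree g t ∧ t.root = g.initial ∧ t.yield = w := by
  obtain ⟨cs, hcs, rfl, hval⟩ := exists_forest_of_derives hw
  obtain ⟨c, rfl, hc⟩ := List.map_eq_singleton_iff.mp hcs.symm
  rcases c with a | t
  · cases hc
  · exact ⟨t, hval t (by simp), Symbol.nonterminal.inj hc, by simp⟩

lemma IsParseTree.yield_mem_language {t : ParseTree T g.NT} (ht : IsParseTree g t)
    (hroot : t.root = g.initial) : t.yield ∈ g.language := by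
  simpa [← hroot] using ht.derives

lemma IsParseTree.exists_rule {t : ParseTree T g.NT} (ht : IsParseTree g t) :
    ∃ r ∈ g.rules, r.input = t.root := by
  cases ht with
  | node r hr _ _ => exact ⟨r, hr, rfl⟩

lemma IsParseTree.length_yield_le {b : ℕ} (hb : 1 ≤ b)
    (hg : ∀ r ∈ g.rules, r.output.length ≤ b) {t : ParseTree T g.NT} (ht : IsParseTree g t) :
    t.yield.length ≤ b ^ t.height := by
  induction ht with
  | @node cs r hr hout _ ih =>
    have hlen : cs.length ≤ b := by simpa [hout] using hg r hr
    calc (yields cs).length ≤ cs.length * b ^ heights cs :=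
          length_yields_le (Nat.one_le_pow _ _ hb) fun t ht =>
            (ih t ht).trans (Nat.pow_le_pow_right hb (height_le_heights ht))
      _ ≤ b * b ^ heights cs := Nat.mul_le_mul_right _ hlen
      _ = b ^ (ParseTree.node r.input cs).height := by simp [pow_succ, mul_comm]

lemma IsParseTree.exists_spine {t : ParseTree T g.NT} (ht : IsParseTree g t) :
    ∃ ts, (t :: ts).length = t.height ∧ (t :: ts).Pairwise (Relation.TransGen HasChild) := by
  induction ht with
  | @node cs r _ _ _ ih =>
    by_cases h0 : heights cs = 0
    · exact ⟨[], by simp [h0], List.pairwise_singleton _ _⟩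
    obtain ⟨s, hs, hheight⟩ := exists_height_eq_heights h0
    obtain ⟨ts, hlen, hpath⟩ := ih s hs
    refine ⟨s :: ts, by simp_all, List.pairwise_cons.mpr ⟨?_, hpath⟩⟩
    have hchild : (ParseTree.node r.input cs).HasChild s := hs
    intro x hx
    rcases List.mem_cons.mp hx with rfl | hx
    · exact .single hchild
    · exact .head hchild (List.rel_of_pairwise_cons hpath hx)

lemma IsParseTree.exists_replace {t s : ParseTree T g.NT} (ht : IsParseTree g t)
    (h : Relation.ReflTransGen HasChild t s) :
    ∃ u z, t.yield = u ++ s.yield ++ z ∧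
      ∀ s', IsParseTree g s' → s'.root = s.root →
        ∃ t', IsParseTree g t' ∧ t'.root = t.root ∧ t'.yield = u ++ s'.yield ++ z ∧
          t'.size + s.size = t.size + s'.size := by
  induction h using Relation.ReflTransGen.head_induction_on with
  | refl => exact ⟨[], [], by simp, fun s' hs' hroot => ⟨s', hs', hroot, by simp, Nat.add_comm _ _⟩⟩
  | @head t c hc _ ih =>
    cases ht with
    | @node cs r hr hout hcs =>
    obtain ⟨l, l', rfl⟩ := List.append_of_mem (show .inr c ∈ cs from hc)
    obtain ⟨u, z, hyield, hrep⟩ := ih (hcs c hc)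
    refine ⟨yields l ++ u, z ++ yields l', by simp [hyield], fun s' hs' hroot => ?_⟩
    obtain ⟨c', hc', hroot', hyield', hsize'⟩ := hrep s' hs' hroot
    refine ⟨.node r.input (l ++ .inr c' :: l'), .node r hr (by simp [hout, hroot']) ?_, rfl,
      by simp [hyield'], by simp; omega⟩
    intro x hx
    simp only [List.mem_append, List.mem_cons, Sum.inr.injEq] at hx
    rcases hx with hx | rfl | hx
    · exact hcs x (by simp [hx])
    · exact hc'
    · exact hcs x (by simp [hx])

/-- Minimality of `t` makes `v ++ y` nonempty: otherwise plugging the lower occurrence of the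
repeated nonterminal in place of the upper one would give a smaller tree with the same yield. -/
lemma IsParseTree.exists_pumping [DecidableEq g.NT] {t : ParseTree T g.NT}
    (ht : IsParseTree g t)
    (hmin : ∀ t', IsParseTree g t' → t'.root = t.root → t'.yield = t.yield → t.size ≤ t'.size)
    (hheight : (g.rules.image ContextFreeRule.input).card < t.height) :
    ∃ u v x y z, t.yield = u ++ v ++ x ++ y ++ z ∧ v ++ y ≠ [] ∧
      ∀ k, ∃ t', IsParseTree g t' ∧ t'.root = t.root ∧
        t'.yield = u ++ (List.replicate k v).flatten ++ x ++ (List.replicate k y).flatten ++ z := by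
  obtain ⟨ts, hlen, hpath⟩ := ht.exists_spine
  have hsub : ∀ s ∈ t :: ts, Relation.ReflTransGen HasChild t s := by
    intro s hs
    rcases List.mem_cons.mp hs with rfl | hs
    · exact .refl
    · exact (List.rel_of_pairwise_cons hpath hs).to_reflTransGen
  obtain ⟨t₁, ht₁, t₂, h₁₂, hroot⟩ := exists_transGen_root_eq hpath
    (fun s hs => by
      obtain ⟨r, hr, hin⟩ := (ht.of_reflTransGen (hsub s hs)).exists_rule
      exact Finset.mem_image.mpr ⟨r, hr, hin⟩) (hlen ▸ hheight)
  have hv₁ := ht.of_reflTransGen (hsub t₁ ht₁)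
  obtain ⟨u, z, hyield, hrep⟩ := ht.exists_replace (hsub t₁ ht₁)
  obtain ⟨v, y, hyield₁, hrep₁⟩ := hv₁.exists_replace h₁₂.to_reflTransGen
  have hv₂ := hv₁.of_reflTransGen h₁₂.to_reflTransGen
  refine ⟨u, v, t₂.yield, y, z, by simp [hyield, hyield₁], ?_, fun k => ?_⟩
  · intro hvy
    obtain ⟨rfl, rfl⟩ := List.append_eq_nil_iff.mp hvy
    obtain ⟨t', hv', hroot', hyield', hsize'⟩ := hrep t₂ hv₂ hroot.symm
    have := hmin t' hv' hroot' (by simp [hyield', hyield, hyield₁])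
    have := size_lt_of_transGen h₁₂
    omega
  have hiter : ∀ k, ∃ s, IsParseTree g s ∧ s.root = t₁.root ∧
      s.yield = (List.replicate k v).flatten ++ t₂.yield ++ (List.replicate k y).flatten := by
    intro k
    induction k with
    | zero => exact ⟨t₂, hv₂, hroot.symm, by simp⟩
    | succ k ih =>
      obtain ⟨s, hs, hsroot, hsyield⟩ := ih
      obtain ⟨s', hs', hsroot', hsyield', -⟩ := hrep₁ s hs (hsroot.trans hroot)
      refine ⟨s', hs', hsroot', ?_⟩
      rw [hsyield', hsyield]
      nth_rewrite 2 [List.replicate_succ']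
      simp [List.replicate_succ]
  obtain ⟨s, hs, hsroot, hsyield⟩ := hiter k
  obtain ⟨t', hv', hroot', hyield', -⟩ := hrep s hs hsroot
  exact ⟨t', hv', hroot', by simp [hyield', hsyield]⟩

theorem exists_pumping_length (g : ContextFreeGrammar T) :
    ∃ p, ∀ w ∈ g.language, p ≤ w.length → ∃ u v x y z, w = u ++ v ++ x ++ y ++ z ∧ v ++ y ≠ [] ∧
      ∀ k, u ++ (List.replicate k v).flatten ++ x ++ (List.replicate k y).flatten ++ z ∈
        g.language := by
  classical
  set b := g.rules.sup (fun r => r.output.length) + 2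
  set K := (g.rules.image ContextFreeRule.input).card
  refine ⟨b ^ (K + 1), fun w hw hlen => ?_⟩
  obtain ⟨t, ⟨ht, hroot, rfl⟩, hmin⟩ := (measure ParseTree.size).wf.has_min
    {t | IsParseTree g t ∧ t.root = g.initial ∧ t.yield = w} (exists_isParseTree_of_mem_language hw)
  have hheight : K < t.height := by
    have hb : ∀ r ∈ g.rules, r.output.length ≤ b := fun r hr =>
      (Finset.le_sup (f := fun r => r.output.length) hr).trans (Nat.le_add_right _ _)
    have := hlen.trans (ht.length_yield_le (by omega) hb)
    exact Nat.lt_of_succ_le ((Nat.pow_le_pow_iff_right (by omega)).mp this)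
  obtain ⟨u, v, x, y, z, hw, hvy, hpump⟩ := ht.exists_pumping
    (fun t' ht' hroot' hyield' => not_lt.mp (hmin t' ⟨ht', hroot'.trans hroot, hyield'⟩)) hheight
  refine ⟨u, v, x, y, z, hw, hvy, fun k => ?_⟩
  obtain ⟨t', ht', hroot', hyield'⟩ := hpump k
  exact hyield' ▸ ht'.yield_mem_language (hroot'.trans hroot)

end ContextFreeGrammar

lemma List.eq_of_pairwise_le_append_self {α : Type*} [PartialOrder α] {l : List α}
    (h : (l ++ l).Pairwise (· ≤ ·)) {a b : α} (ha : a ∈ l) (hb : b ∈ l) : a = b := by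
  have h := (List.pairwise_append.mp h).2.2
  exact le_antisymm (h a ha b hb) (h b hb a ha)

/-- `aⁿbⁿcⁿ`, with the letters `a, b, c` encoded as `0, 1, 2 : Fin 3`. -/
def abcWord (n : ℕ) : List (Fin 3) :=
  List.replicate n 0 ++ List.replicate n 1 ++ List.replicate n 2

def anbncn : Language (Fin 3) := {w | ∃ n, w = abcWord (n + 1)}

@[simp] lemma count_abcWord (n : ℕ) (a : Fin 3) : (abcWord n).count a = n := by
  fin_cases a <;> simp [abcWord, List.count_replicate]

lemma pairwise_le_abcWord (n : ℕ) : (abcWord n).Pairwise (· ≤ ·) := by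
  simp only [abcWord, List.pairwise_append, List.pairwise_replicate, List.mem_append]
  refine ⟨⟨by simp, by simp, ?_⟩, by simp, ?_⟩ <;> intro a ha b hb
  all_goals simp only [List.mem_replicate] at ha hb
  all_goals omega

lemma mem_append_of_pump_abcWord {n m : ℕ} {u v x y z : List (Fin 3)}
    (hw : abcWord n = u ++ v ++ x ++ y ++ z) (hm : u ++ v ++ v ++ x ++ y ++ y ++ z = abcWord m)
    (hvy : v ++ y ≠ []) (a : Fin 3) : a ∈ v ++ y := by
  have hcount : ∀ a : Fin 3, m = n + (v ++ y).count a := by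
    intro a
    have h₁ := congrArg (List.count a) hw
    have h₂ := congrArg (List.count a) hm
    simp only [count_abcWord, List.count_append] at h₁ h₂ ⊢
    omega
  obtain ⟨c, hc⟩ := List.exists_mem_of_ne_nil _ hvy
  rw [← List.count_pos_iff] at hc ⊢
  have := hcount a
  have := hcount c
  omega

/-- Pumping keeps the three letter counts equal, so `v ++ y` contains every letter; keeping the
word sorted forces `v` and `y` to be powers of single letters. -/
theorem not_isContextFree_anbncn : ¬ anbncn.IsContextFree := by
  rintro ⟨g, hg⟩
  obtain ⟨p, hp⟩ := g.exists_pumping_length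
  obtain ⟨u, v, x, y, z, hw, hvy, hpump⟩ :=
    hp (abcWord (p + 1)) (hg ▸ ⟨p, rfl⟩) (by simp [abcWord]; omega)
  obtain ⟨m, hm⟩ : u ++ v ++ v ++ x ++ y ++ y ++ z ∈ anbncn := by
    simpa [← hg] using hpump 2
  have hmem := mem_append_of_pump_abcWord hw hm hvy
  have hsorted := hm ▸ pairwise_le_abcWord (m + 1)
  have hv : ∀ a ∈ v, ∀ b ∈ v, a = b := fun _ ha _ hb =>
    List.eq_of_pairwise_le_append_self (hsorted.sublist (show v ++ v <:+: _ from
      ⟨u, x ++ y ++ y ++ z, by simp⟩).sublist) ha hb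
  have hy : ∀ a ∈ y, ∀ b ∈ y, a = b := fun _ ha _ hb =>
    List.eq_of_pairwise_le_append_self (hsorted.sublist (show y ++ y <:+: _ from
      ⟨u ++ v ++ v ++ x, z, by simp⟩).sublist) ha hb
  obtain ⟨c, d, hcd, hcdv⟩ := Fintype.exists_ne_map_eq_of_card_lt (fun c : Fin 3 => c ∈ v) (by simp)
  by_cases hc : c ∈ v
  · exact hcd (hv c hc d (hcdv ▸ hc))
  · have hd : d ∉ v := hcdv ▸ hc
    exact hcd (hy c ((List.mem_append.mp (hmem c)).resolve_left hc) d
      ((List.mem_append.mp (hmem d)).resolve_left hd))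

namespace PCGS

variable {N T : Type} {n : ℕ}

lemma not_isTerminalWord_of_nt_mem {x : List (PCSym N T n)} {A : N} (h : .nt A ∈ x) :
    ¬ isTerminalWord x := fun ht => by
  obtain ⟨a, ha⟩ := ht _ h
  cases ha

lemma isTerminalWord_map_tm (w : List T) : isTerminalWord (w.map .tm : List (PCSym N T n)) := by
  simp [isTerminalWord]

lemma Rewrite.not_isTerminalWord {G : PCComponent N T n} {x y : List (PCSym N T n)}
    (h : Rewrite G x y) : ¬ isTerminalWord x := by
  obtain ⟨u, v, A, w, rfl, -, -⟩ := h
  exact not_isTerminalWord_of_nt_mem (A := A) (by simp)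

lemma eq_of_map_tm_append_nt_eq {u v : List T} {A B : N} {x y : List (PCSym N T n)}
    (h : u.map .tm ++ .nt A :: v.map .tm = x ++ .nt B :: y) :
    x = u.map .tm ∧ B = A ∧ y = v.map .tm := by
  induction u generalizing x with
  | nil =>
    rcases x with _ | ⟨s, x⟩
    · simp_all
    · simp only [List.map_nil, List.nil_append, List.cons_append, List.cons.injEq] at h
      have : PCSym.nt B ∈ v.map (.tm : T → PCSym N T n) := by simp [h.2]
      simp at this
  | cons a u ih =>
    rcases x with _ | ⟨s, x⟩
    · simp at h
    · simp only [List.map_cons, List.cons_append, List.cons.injEq] at h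
      obtain ⟨rfl, h⟩ := h
      obtain ⟨rfl, rfl, rfl⟩ := ih h
      simp

lemma rewrite_map_tm_iff {G : PCComponent N T n} {u v : List T} {A : N}
    {y : List (PCSym N T n)} :
    Rewrite G (u.map .tm ++ .nt A :: v.map .tm) y ↔
      ∃ w, (A, w) ∈ G.rules ∧ y = u.map .tm ++ w ++ v.map .tm := by
  constructor
  · rintro ⟨x, x', B, w, h, hw, rfl⟩
    obtain ⟨rfl, rfl, rfl⟩ := eq_of_map_tm_append_nt_eq h
    exact ⟨w, hw, rfl⟩
  · rintro ⟨w, hw, rfl⟩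
    exact ⟨_, _, A, w, rfl, hw, rfl⟩

lemma subst_append (c : Fin n → List (PCSym N T n)) (x y : List (PCSym N T n)) :
    subst c (x ++ y) = subst c x ++ subst c y :=
  List.flatMap_append

lemma subst_map_tm (c : Fin n → List (PCSym N T n)) (w : List T) :
    subst c (w.map .tm) = w.map .tm := by
  rw [subst, List.flatMap_map]
  exact List.map_eq_flatMap.symm

lemma subst_qr (c : Fin n → List (PCSym N T n)) (i : Fin n) : subst c [.qr i] = c i := by
  simp [subst]

variable {b : Bool} {Γ : PCGS N T n} {c c' : Fin n → List (PCSym N T n)} {i : Fin n}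

lemma Step.rewrite (h : Step b Γ c c') (hq : ∀ j, ¬ hasQuery (c j))
    (ht : ¬ isTerminalWord (c i)) : Rewrite (Γ.comp i) (c i) (c' i) := by
  rcases h with ⟨-, h⟩ | ⟨⟨j, hj⟩, -⟩
  · exact ((h i).resolve_left fun h => ht h.1).2
  · exact absurd hj (hq j)

lemma Step.eq_of_isTerminalWord (h : Step b Γ c c') (hq : ∀ j, ¬ hasQuery (c j))
    (ht : isTerminalWord (c i)) : c' i = c i := by
  rcases h with ⟨-, h⟩ | ⟨⟨j, hj⟩, -⟩
  · exact ((h i).resolve_right fun h => h.1 ht).2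
  · exact absurd hj (hq j)

lemma Step.commStep (h : Step b Γ c c') (hq : hasQuery (c i)) : CommStep b Γ c c' :=
  h.resolve_left fun h => h.1 i hq

lemma Step.rewrite_of_nt_mem {x : List (PCSym N T n)} {A : N} (h : Step b Γ c c')
    (hq : ∀ j, ¬ hasQuery (c j)) (hx : c i = x) (hA : .nt A ∈ x) : Rewrite (Γ.comp i) x (c' i) :=
  hx ▸ h.rewrite hq (hx ▸ not_isTerminalWord_of_nt_mem hA)

lemma Step.of_rewrite (hq : ∀ j, ¬ hasQuery (c j)) (h : ∀ j, Rewrite (Γ.comp j) (c j) (c' j)) :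
    Step b Γ c c' :=
  .inl ⟨hq, fun j => .inr ⟨(h j).not_isTerminalWord, h j⟩⟩

lemma CommStep.eq_subst (h : CommStep b Γ c c') (ha : answered c i) : c' i = subst c (c i) := by
  rcases h.2 i with ⟨-, h⟩ | ⟨-, hna, -⟩ | ⟨hnq, -⟩ | ⟨hnq, -⟩
  · exact h
  · exact absurd ha hna
  · exact absurd ha.1 hnq
  · exact absurd ha.1 hnq

lemma CommStep.eq_or_eq_start (h : CommStep b Γ c c') (hq : ¬ hasQuery (c i)) :
    c' i = c i ∨ c' i = [.nt (Γ.comp i).start] := by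
  rcases h.2 i with ⟨ha, -⟩ | ⟨hq', -⟩ | ⟨-, -, -, h⟩ | ⟨-, -, h⟩
  · exact absurd ha.1 hq
  · exact absurd hq' hq
  · exact .inr h
  · exact .inl h

end PCGS

namespace AnBnCn

open PCGS List

abbrev Sym := PCSym (Fin 2) (Fin 3) 2

/-- Master rules `S₀ → aS₀ | aQ₁`, `S₁ → ε`; helper rule `S₁ → bS₁c`. -/
def system : PCGS (Fin 2) (Fin 3) 2 where
  comp := ![⟨[(0, [.tm 0, .nt 0]), (0, [.tm 0, .qr 1]), (1, [])], 0⟩,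
            ⟨[(1, [.tm 1, .nt 1, .tm 2])], 1⟩]
  master := 0

def growing (t : ℕ) : List Sym := (replicate t 0).map .tm ++ [.nt 0]

def querying (n : ℕ) : List Sym := (replicate n 0).map .tm ++ [.qr 1]

def received (n : ℕ) : List Sym :=
  (replicate n (0 : Fin 3) ++ replicate n 1).map .tm ++ .nt 1 :: (replicate n 2).map .tm

def helper (s : ℕ) : List Sym := (replicate s 1).map .tm ++ .nt 1 :: (replicate s 2).map .tm

lemma rewrite_growing_iff {t : ℕ} {y : List Sym} :
    Rewrite (system.comp 0) (growing t) y ↔ y = growing (t + 1) ∨ y = querying (t + 1) := by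
  refine (rewrite_map_tm_iff (v := [])).trans ?_
  simp [system, growing, querying, replicate_succ']

lemma rewrite_received_iff {n : ℕ} {y : List Sym} :
    Rewrite (system.comp 0) (received n) y ↔ y = (abcWord n).map .tm := by
  rw [received, rewrite_map_tm_iff]
  simp [system, abcWord]

lemma rewrite_helper_iff {s : ℕ} {y : List Sym} :
    Rewrite (system.comp 1) (helper s) y ↔ y = helper (s + 1) := by
  rw [helper, rewrite_map_tm_iff, helper, replicate_succ' (n := s) (a := 1)]
  simp [system, replicate_succ]

lemma not_hasQuery_growing (t : ℕ) : ¬ hasQuery (growing t) := by simp [hasQuery, growing]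
lemma not_hasQuery_received (n : ℕ) : ¬ hasQuery (received n) := by simp [hasQuery, received]
lemma not_hasQuery_helper (s : ℕ) : ¬ hasQuery (helper s) := by simp [hasQuery, helper]
lemma not_hasQuery_map_tm (w : List (Fin 3)) : ¬ hasQuery (w.map .tm : List Sym) := by
  simp [hasQuery]
lemma hasQuery_querying (n : ℕ) : hasQuery (querying n) := ⟨1, by simp [querying]⟩

lemma answered_querying {c : Fin 2 → List Sym} {n s : ℕ} (h₀ : c 0 = querying n)
    (h₁ : c 1 = helper s) : answered c 0 := by
  refine ⟨h₀ ▸ hasQuery_querying n, fun j hj => ?_⟩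
  obtain rfl : j = 1 := by simpa [h₀, querying] using hj
  exact h₁ ▸ not_hasQuery_helper s

lemma subst_querying {c : Fin 2 → List Sym} {n : ℕ} (h₁ : c 1 = helper n) :
    subst c (querying n) = received n := by
  simp only [querying, subst_append, subst_map_tm, subst_qr, h₁]
  simp [helper, received]

lemma forall_not_hasQuery {c : Fin 2 → List Sym} {x : List Sym} {s : ℕ} (h₀ : c 0 = x)
    (h₁ : c 1 = helper s) (hx : ¬ hasQuery x) : ∀ j, ¬ hasQuery (c j) :=
  Fin.forall_fin_two.mpr ⟨h₀ ▸ hx, h₁ ▸ not_hasQuery_helper s⟩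

lemma helper_eq_of_step {b : Bool} {c c' : Fin 2 → List Sym} {s : ℕ} (hs : Step b system c c')
    (hq : ∀ j, ¬ hasQuery (c j)) (h₁ : c 1 = helper s) : c' 1 = helper (s + 1) :=
  rewrite_helper_iff.mp (hs.rewrite_of_nt_mem hq h₁ (A := 1) (by simp [helper]))

inductive Phase (c : Fin 2 → List Sym) : Prop
  | grow (t : ℕ) (h₀ : c 0 = growing t) (h₁ : c 1 = helper t)
  | query (n : ℕ) (h₀ : c 0 = querying (n + 1)) (h₁ : c 1 = helper (n + 1))
  | receive (n s : ℕ) (h₀ : c 0 = received (n + 1)) (h₁ : c 1 = helper s)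
  | finish (n s : ℕ) (h₀ : c 0 = (abcWord (n + 1)).map .tm) (h₁ : c 1 = helper s)

lemma Phase.step {b : Bool} {c c' : Fin 2 → List Sym} (h : Phase c) (hs : Step b system c c') :
    Phase c' := by
  rcases h with ⟨t, h₀, h₁⟩ | ⟨n, h₀, h₁⟩ | ⟨n, s, h₀, h₁⟩ | ⟨n, s, h₀, h₁⟩
  · have hq := forall_not_hasQuery h₀ h₁ (not_hasQuery_growing t)
    rcases rewrite_growing_iff.mp (hs.rewrite_of_nt_mem hq h₀ (A := 0) (by simp [growing]))
      with h₀' | h₀'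
    exacts [.grow _ h₀' (helper_eq_of_step hs hq h₁), .query _ h₀' (helper_eq_of_step hs hq h₁)]
  · have hc := hs.commStep (i := 0) (h₀ ▸ hasQuery_querying (n + 1))
    have h₀' : c' 0 = received (n + 1) := by
      rw [hc.eq_subst (answered_querying h₀ h₁), h₀, subst_querying h₁]
    rcases hc.eq_or_eq_start (i := 1) (h₁ ▸ not_hasQuery_helper _) with h₁' | h₁'
    exacts [.receive n _ h₀' (h₁'.trans h₁), .receive n 0 h₀' h₁']
  · have hq := forall_not_hasQuery h₀ h₁ (not_hasQuery_received _)
    exact .finish n (s + 1)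
      (rewrite_received_iff.mp (hs.rewrite_of_nt_mem hq h₀ (A := 1) (by simp [received])))
      (helper_eq_of_step hs hq h₁)
  · have hq := forall_not_hasQuery h₀ h₁ (not_hasQuery_map_tm _)
    exact .finish n (s + 1) ((hs.eq_of_isTerminalWord hq (h₀ ▸ isTerminalWord_map_tm _)).trans h₀)
      (helper_eq_of_step hs hq h₁)

lemma Phase.of_reachable {b : Bool} {c : Fin 2 → List Sym}
    (h : Relation.ReflTransGen (Step b system) (initConfig system) c) : Phase c := by
  induction h with
  | refl => exact .grow 0 rfl rfl
  | tail _ hs ih => exact ih.step hs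

lemma step_grow (b : Bool) (t : ℕ) :
    Step b system ![growing t, helper t] ![growing (t + 1), helper (t + 1)] :=
  .of_rewrite (forall_not_hasQuery rfl rfl (not_hasQuery_growing t))
    (Fin.forall_fin_two.mpr ⟨rewrite_growing_iff.mpr (.inl rfl), rewrite_helper_iff.mpr rfl⟩)

lemma step_query (b : Bool) (t : ℕ) :
    Step b system ![growing t, helper t] ![querying (t + 1), helper (t + 1)] :=
  .of_rewrite (forall_not_hasQuery rfl rfl (not_hasQuery_growing t))
    (Fin.forall_fin_two.mpr ⟨rewrite_growing_iff.mpr (.inr rfl), rewrite_helper_iff.mpr rfl⟩)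

lemma step_communicate (b : Bool) (n : ℕ) :
    Step b system ![querying n, helper n] ![received n, helper (bif b then 0 else n)] := by
  have ha : answered ![querying n, helper n] 0 := answered_querying rfl rfl
  refine .inr ⟨⟨0, hasQuery_querying n⟩, Fin.forall_fin_two.mpr ⟨.inl ⟨ha, ?_⟩, ?_⟩⟩
  · exact (subst_querying rfl).symm
  · cases b
    · exact .inr (.inr (.inr ⟨not_hasQuery_helper n, .inl rfl, rfl⟩))
    · exact .inr (.inr (.inl ⟨not_hasQuery_helper n, rfl, ⟨0, ha, by simp [querying]⟩, rfl⟩))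

lemma step_finish (b : Bool) (n s : ℕ) :
    Step b system ![received n, helper s] ![(abcWord n).map .tm, helper (s + 1)] :=
  .of_rewrite (forall_not_hasQuery rfl rfl (not_hasQuery_received n))
    (Fin.forall_fin_two.mpr ⟨rewrite_received_iff.mpr rfl, rewrite_helper_iff.mpr rfl⟩)

lemma initConfig_system : initConfig system = ![growing 0, helper 0] := by
  funext i
  fin_cases i <;> rfl

lemma reachable_growing (b : Bool) (t : ℕ) :
    Relation.ReflTransGen (Step b system) (initConfig system) ![growing t, helper t] := by
  induction t with
  | zero => rw [initConfig_system]
  | succ t ih => exact ih.tail (step_grow b t)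

theorem language_system (b : Bool) : system.language b = anbncn := by
  ext w
  constructor
  · rintro ⟨c, hc, hw⟩
    have hterm : isTerminalWord (c 0) := hw ▸ isTerminalWord_map_tm w
    rcases Phase.of_reachable hc with ⟨t, h₀, -⟩ | ⟨n, h₀, -⟩ | ⟨n, s, h₀, -⟩ | ⟨n, s, h₀, -⟩
    · obtain ⟨a, ha⟩ := hterm (.nt 0) (by simp [h₀, growing]); cases ha
    · obtain ⟨a, ha⟩ := hterm (.qr 1) (by simp [h₀, querying]); cases ha
    · obtain ⟨a, ha⟩ := hterm (.nt 1) (by simp [h₀, received]); cases ha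
    · exact ⟨n, List.map_injective_iff.mpr (fun _ _ => PCSym.tm.inj) (hw.symm.trans h₀)⟩
  · rintro ⟨n, rfl⟩
    refine ⟨_, (((reachable_growing b n).tail (step_query b n)).tail (step_communicate b _)).tail
      (step_finish b _ _), ?_⟩
    rfl

end AnBnCn

namespace ContextFreeGrammar

open PCGS

variable {T : Type} (g : ContextFreeGrammar T)

/-- `g.NT` need not be finite, but only finitely many nonterminals occur in `g`. -/
def usedNT : Set g.NT :=
  insert g.initial (⋃ r ∈ g.rules, insert r.input {A | .nonterminal A ∈ r.output})

lemma initial_mem_usedNT : g.initial ∈ g.usedNT := Set.mem_insert _ _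

variable {g}

lemma input_mem_usedNT {r : ContextFreeRule T g.NT} (hr : r ∈ g.rules) : r.input ∈ g.usedNT :=
  .inr (Set.mem_biUnion hr (Set.mem_insert _ _))

lemma output_mem_usedNT {r : ContextFreeRule T g.NT} (hr : r ∈ g.rules) {A : g.NT}
    (hA : .nonterminal A ∈ r.output) : A ∈ g.usedNT :=
  .inr (Set.mem_biUnion hr (.inr hA))

variable (g)

lemma finite_usedNT : g.usedNT.Finite :=
  .insert _ <| g.rules.finite_toSet.biUnion fun r _ => .insert _ <|
    r.output.finite_toSet.preimage fun _ _ _ _ => Symbol.nonterminal.inj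

open Classical in
/-- Nonterminals outside `usedNT` are sent to an arbitrary junk value; they never occur. -/
noncomputable def toUsedNT (A : g.NT) : g.usedNT :=
  if h : A ∈ g.usedNT then ⟨A, h⟩ else ⟨g.initial, g.initial_mem_usedNT⟩

noncomputable def toPCSym : Symbol T g.NT → PCSym g.usedNT T 1
  | .terminal a => .tm a
  | .nonterminal A => .nt (g.toUsedNT A)

/-- Query symbols never occur, so their image is irrelevant. -/
def ofPCSym : PCSym g.usedNT T 1 → Symbol T g.NT
  | .tm a => .terminal a
  | .nt A => .nonterminal A
  | .qr _ => .nonterminal g.initial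

noncomputable def toPCGS : PCGS g.usedNT T 1 where
  comp _ := ⟨g.rules.toList.map fun r => (g.toUsedNT r.input, r.output.map g.toPCSym),
    g.toUsedNT g.initial⟩
  master := 0

variable {g}

lemma toUsedNT_of_mem {A : g.NT} (h : A ∈ g.usedNT) : g.toUsedNT A = ⟨A, h⟩ := dif_pos h

lemma map_ofPCSym_map_toPCSym {x : List (Symbol T g.NT)}
    (hx : ∀ A, .nonterminal A ∈ x → A ∈ g.usedNT) : (x.map g.toPCSym).map g.ofPCSym = x := by
  induction x with
  | nil => rfl
  | cons s x ih =>
    simp only [List.map_cons, List.cons.injEq]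
    refine ⟨?_, ih fun A hA => hx A (List.mem_cons_of_mem _ hA)⟩
    cases s with
    | terminal a => rfl
    | nonterminal A => simp [toPCSym, ofPCSym, toUsedNT_of_mem (hx A List.mem_cons_self)]

lemma not_hasQuery_map_toPCSym (x : List (Symbol T g.NT)) : ¬ hasQuery (x.map g.toPCSym) := by
  rintro ⟨i, hi⟩
  obtain ⟨s, -, hs⟩ := List.mem_map.mp hi
  cases s <;> cases hs

lemma Produces.rewrite_toPCGS {u v : List (Symbol T g.NT)} (h : g.Produces u v) (i : Fin 1) :
    Rewrite (g.toPCGS.comp i) (u.map g.toPCSym) (v.map g.toPCSym) := by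
  obtain ⟨r, hr, hrw⟩ := h
  obtain ⟨p, q, rfl, rfl⟩ := hrw.exists_parts
  exact ⟨p.map g.toPCSym, q.map g.toPCSym, _, _, by simp [toPCSym],
    List.mem_map.mpr ⟨r, Finset.mem_toList.mpr hr, rfl⟩, by simp⟩

lemma Derives.toPCGS {b : Bool} {u v : List (Symbol T g.NT)} (h : g.Derives u v) :
    Relation.ReflTransGen (Step b g.toPCGS) (fun _ => u.map g.toPCSym)
      (fun _ => v.map g.toPCSym) := by
  induction h with
  | refl => exact .refl
  | tail _ h ih =>
    exact ih.tail (.of_rewrite (fun _ => not_hasQuery_map_toPCSym _) h.rewrite_toPCGS)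

lemma not_hasQuery_and_produces_of_rewrite_toPCGS {x y : List (PCSym g.usedNT T 1)} {i : Fin 1}
    (hx : ¬ hasQuery x) (h : Rewrite (g.toPCGS.comp i) x y) :
    ¬ hasQuery y ∧ g.Produces (x.map g.ofPCSym) (y.map g.ofPCSym) := by
  obtain ⟨u, v, A, w, rfl, hrule, rfl⟩ := h
  obtain ⟨r, hr, hrule⟩ := List.mem_map.mp hrule
  obtain ⟨rfl, rfl⟩ := Prod.mk.inj hrule
  rw [Finset.mem_toList] at hr
  refine ⟨?_, r, hr, ?_⟩
  · rintro ⟨j, hj⟩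
    rcases List.mem_append.mp hj with hj | hj
    · rcases List.mem_append.mp hj with hj | hj
      · exact hx ⟨j, by simp [hj]⟩
      · exact not_hasQuery_map_toPCSym _ ⟨j, hj⟩
    · exact hx ⟨j, by simp [hj]⟩
  · simpa [ofPCSym, toUsedNT_of_mem (input_mem_usedNT hr),
      map_ofPCSym_map_toPCSym fun _ => output_mem_usedNT hr] using
      r.rewrites_of_exists_parts (u.map g.ofPCSym) (v.map g.ofPCSym)

lemma not_hasQuery_and_derives_of_reachable {b : Bool} {c : Fin 1 → List (PCSym g.usedNT T 1)}
    (h : Relation.ReflTransGen (Step b g.toPCGS) (initConfig g.toPCGS) c) :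
    ¬ hasQuery (c 0) ∧ g.Derives [.nonterminal g.initial] ((c 0).map g.ofPCSym) := by
  induction h with
  | refl =>
    refine ⟨by simp [hasQuery, initConfig], ?_⟩
    simp only [initConfig, toPCGS, toUsedNT_of_mem g.initial_mem_usedNT, List.map_cons,
      List.map_nil, ofPCSym]
    exact Derives.refl _
  | @tail c c' _ hs ih =>
    obtain ⟨hq, hder⟩ := ih
    have hq' : ∀ j, ¬ hasQuery (c j) := fun j => Subsingleton.elim j 0 ▸ hq
    by_cases ht : isTerminalWord (c 0)
    · rw [hs.eq_of_isTerminalWord hq' ht]; exact ⟨hq, hder⟩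
    · obtain ⟨hq'', hp⟩ := not_hasQuery_and_produces_of_rewrite_toPCGS hq (hs.rewrite hq' ht)
      exact ⟨hq'', hder.tail hp⟩

theorem language_toPCGS (b : Bool) : g.toPCGS.language b = g.language := by
  ext w
  constructor
  · rintro ⟨c, hc, hw⟩
    have := (not_hasQuery_and_derives_of_reachable hc).2
    rw [show c 0 = w.map .tm from hw, List.map_map] at this
    exact this
  · intro hw
    refine ⟨_, hw.toPCGS, ?_⟩
    simp only [List.map_map]
    rfl

end ContextFreeGrammar

lemma setOf_isContextFree_subset_npcLang {T : Type} {n : ℕ} (hn : 1 ≤ n) :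
    {L : Language T | L.IsContextFree} ⊆ NPCLang n T := by
  rintro L ⟨g, rfl⟩
  exact ⟨1, hn, g.usedNT, g.finite_usedNT.to_subtype, g.toPCGS, g.language_toPCGS false⟩

lemma setOf_isContextFree_subset_pcLangR {T : Type} {n : ℕ} (hn : 1 ≤ n) :
    {L : Language T | L.IsContextFree} ⊆ PCLangR n T := by
  rintro L ⟨g, rfl⟩
  exact ⟨1, hn, g.usedNT, g.finite_usedNT.to_subtype, g.toPCGS, g.language_toPCGS true⟩

lemma anbncn_mem_npcLang : anbncn ∈ NPCLang 2 (Fin 3) :=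
  ⟨2, le_rfl, Fin 2, inferInstance, AnBnCn.system, AnBnCn.language_system false⟩

lemma anbncn_mem_pcLangR : anbncn ∈ PCLangR 2 (Fin 3) :=
  ⟨2, le_rfl, Fin 2, inferInstance, AnBnCn.system, AnBnCn.language_system true⟩

/-- The class of context-free languages is strictly contained in the class of
languages generated by (returning or non-returning) PC grammar systems with two
context-free components: `L(CF) ⊊ L(X₂ CF)` for `X ∈ {PC, NPC}`. -/
theorem cf_ssubset_pc2 :
    (∀ T : Type, { L : Language T | L.IsContextFree } ⊆ NPCLang 2 T ∧
                 { L : Language T | L.IsContextFree } ⊆ PCLangR 2 T) ∧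
    (∃ (T : Type) (_ : Finite T),
      { L : Language T | L.IsContextFree } ⊂ NPCLang 2 T ∧
      { L : Language T | L.IsContextFree } ⊂ PCLangR 2 T) := by
  refine ⟨fun T => ⟨setOf_isContextFree_subset_npcLang one_le_two,
    setOf_isContextFree_subset_pcLangR one_le_two⟩, Fin 3, inferInstance, ?_, ?_⟩
  · exact (Set.ssubset_iff_of_subset (setOf_isContextFree_subset_npcLang one_le_two)).mpr
      ⟨anbncn, anbncn_mem_npcLang, not_isContextFree_anbncn⟩
  · exact (Set.ssubset_iff_of_subset (setOf_isContextFree_subset_pcLangR one_le_two)).mpr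
      ⟨anbncn, anbncn_mem_pcLangR, not_isContextFree_anbncn⟩
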